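/- arXiv:math/0509563 — 4 statements merged into one kernel-verified Lean document; each statement's English description precedes it below -/
import Mathlib

section
/- For a Courant algebroid Q, the quotient Q̄ = Q/Ω_Q with the induced bracket and anchor is a Lie O_X-algebroid: the induced bracket is skew-symmetric, satisfies the Jacobi identity, the Leibniz rule holds, and the induced anchor map Q̄ → T_X is well defined and a Lie algebra morphism. -/
noncomputable section

/-- The "vector fields" on the algebraic model of the space with function ring `O`. -/
abbrev Vec (O : Type*) [CommRing O] [Algebra ℂ O] := Derivation ℂ O O

/-- Algebraic model of a Courant `O`-algebroid: an `O`-module `Q` equipped with a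
Leibniz bracket, an `O`-linear anchor into vector fields, a symmetric `O`-bilinear
pairing, and a derivation `∂ : O → Q`, subject to the Courant axioms. -/
structure CourantAlgebroid (O : Type*) [CommRing O] [Algebra ℂ O]
    (Q : Type*) [AddCommGroup Q] [Module O Q] where
  bracket : Q → Q → Q
  bracket_add_left : ∀ q₁ q₂ q₃, bracket (q₁ + q₂) q₃ = bracket q₁ q₃ + bracket q₂ q₃
  bracket_add_right : ∀ q₁ q₂ q₃, bracket q₁ (q₂ + q₃) = bracket q₁ q₂ + bracket q₁ q₃
  anchor : Q →ₗ[O] Vec O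
  pair : Q →ₗ[O] Q →ₗ[O] O
  pair_symm : ∀ q₁ q₂, pair q₁ q₂ = pair q₂ q₁
  par : O → Q
  par_add : ∀ f g, par (f + g) = par f + par g
  par_mul : ∀ f g, par (f * g) = f • par g + g • par f
  anchor_par : ∀ f, anchor (par f) = 0
  anchor_bracket : ∀ q₁ q₂, anchor (bracket q₁ q₂) = ⁅anchor q₁, anchor q₂⁆
  jacobi : ∀ q q₁ q₂, bracket q (bracket q₁ q₂)
      = bracket (bracket q q₁) q₂ + bracket q₁ (bracket q q₂)
  leibniz : ∀ (q₁ q₂ : Q) (f : O), bracket q₁ (f • q₂) = f • bracket q₁ q₂ + anchor q₁ f • q₂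
  invar : ∀ q q₁ q₂, pair (bracket q q₁) q₂ + pair q₁ (bracket q q₂)
      = anchor q (pair q₁ q₂)
  bracket_par : ∀ (q : Q) (f : O), bracket q (par f) = par (anchor q f)
  pair_par : ∀ (q : Q) (f : O), pair q (par f) = anchor q f
  symm_bracket : ∀ q₁ q₂, bracket q₁ q₂ + bracket q₂ q₁ = par (pair q₁ q₂)

/-- `Ω_Q`: the `O`-submodule of `Q` generated by the image of the derivation `∂`. -/
def CourantAlgebroid.Omega {O : Type*} [CommRing O] [Algebra ℂ O]
    {Q : Type*} [AddCommGroup Q] [Module O Q] (C : CourantAlgebroid O Q) : Submodule O Q :=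
  Submodule.span O (Set.range C.par)

/-!
`Ω_Q` is spanned by the exact elements `∂f`. The anchor kills them, and `[q, ∂f] = ∂(π(q) f)`
together with the Leibniz rule makes `Ω_Q` a right ideal; since `[q₁, q₂] + [q₂, q₁] = ∂⟨q₁, q₂⟩`
is exact, the bracket is skew modulo `Ω_Q`, so `Ω_Q` is also a left ideal.
-/

namespace CourantAlgebroid

variable {O : Type*} [CommRing O] [Algebra ℂ O] {Q : Type*} [AddCommGroup Q] [Module O Q]
  (C : CourantAlgebroid O Q)

theorem par_mem_omega (f : O) : C.par f ∈ C.Omega :=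
  Submodule.subset_span ⟨f, rfl⟩

theorem bracket_zero (q : Q) : C.bracket q 0 = 0 := by
  have h := C.bracket_add_right q 0 0
  rwa [add_zero, left_eq_add] at h

theorem omega_le_ker_anchor : C.Omega ≤ LinearMap.ker C.anchor :=
  Submodule.span_le.mpr (Set.range_subset_iff.mpr C.anchor_par)

theorem bracket_mem_omega_of_mem_right (q : Q) {w : Q} (hw : w ∈ C.Omega) :
    C.bracket q w ∈ C.Omega := by
  induction hw using Submodule.span_induction with
  | mem x hx =>
    obtain ⟨f, rfl⟩ := hx
    rw [C.bracket_par]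
    exact C.par_mem_omega _
  | zero => rw [C.bracket_zero]; exact C.Omega.zero_mem
  | add x y _ _ hx hy => rw [C.bracket_add_right]; exact C.Omega.add_mem hx hy
  | smul f x hx ih =>
    rw [C.leibniz]
    exact C.Omega.add_mem (C.Omega.smul_mem f ih) (C.Omega.smul_mem _ hx)

theorem bracket_add_bracket_mem_omega (q₁ q₂ : Q) :
    C.bracket q₁ q₂ + C.bracket q₂ q₁ ∈ C.Omega := by
  rw [C.symm_bracket]
  exact C.par_mem_omega _

theorem bracket_mem_omega_of_mem_left (q : Q) {w : Q} (hw : w ∈ C.Omega) :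
    C.bracket w q ∈ C.Omega := by
  rw [← add_sub_cancel_right (C.bracket w q) (C.bracket q w)]
  exact C.Omega.sub_mem (C.bracket_add_bracket_mem_omega w q)
    (C.bracket_mem_omega_of_mem_right q hw)

end CourantAlgebroid

/-- `Q̄ = Q/Ω_Q` is a Lie algebroid, expressed on `Q`: the anchor and bracket descend because
`Ω_Q` lies in the kernel of the anchor and is a two-sided Leibniz ideal, the induced bracket is
skew because the symmetrized bracket lands in `Ω_Q`, and the remaining identities descend
verbatim. -/
theorem quotient_is_lie_algebroid
    (O : Type*) [CommRing O] [Algebra ℂ O]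
    (Q : Type*) [AddCommGroup Q] [Module O Q]
    (C : CourantAlgebroid O Q) :
    (∀ w ∈ C.Omega, C.anchor w = 0)
    ∧ (∀ (q : Q), ∀ w ∈ C.Omega, C.bracket q w ∈ C.Omega ∧ C.bracket w q ∈ C.Omega)
    ∧ (∀ q₁ q₂ : Q, C.bracket q₁ q₂ + C.bracket q₂ q₁ ∈ C.Omega)
    ∧ (∀ q q₁ q₂ : Q, C.bracket q (C.bracket q₁ q₂)
        = C.bracket (C.bracket q q₁) q₂ + C.bracket q₁ (C.bracket q q₂))
    ∧ (∀ (q₁ q₂ : Q) (f : O),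
        C.bracket q₁ (f • q₂) = f • C.bracket q₁ q₂ + (C.anchor q₁ f) • q₂)
    ∧ (∀ q₁ q₂ : Q, C.anchor (C.bracket q₁ q₂) = ⁅C.anchor q₁, C.anchor q₂⁆) := by
  refine ⟨fun _ hw => C.omega_le_ker_anchor hw,
    fun q w hw => ⟨C.bracket_mem_omega_of_mem_right q hw, C.bracket_mem_omega_of_mem_left q hw⟩,
    C.bracket_add_bracket_mem_omega, C.jacobi, C.leibniz, C.anchor_bracket⟩
end
end

section
/- A flat connection on a transitive Courant algebroid is a connection: if ∇ : T_X → Q is an O_X-linear section of the anchor which is a morphism of Leibniz algebras, then the symmetric pairing vanishes on the image of ∇, i.e. ⟨∇ξ, ∇η⟩ = 0 for all vector fields ξ, η. -/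
noncomputable section

/-! Flatness gives `∂⟨∇ξ, ∇η⟩ = [∇ξ, ∇η] + [∇η, ∇ξ] = ∇([ξ, η] + [η, ξ]) = 0`, so every pairing
`⟨∇ξ, ∇η⟩` is a constant. Applied to `fξ` this makes `f ⟨∇ξ, ∇η⟩` constant as well, so a
nonzero constant `⟨∇ξ, ∇η⟩` would force every function `f` to be constant. -/

theorem mem_range_algebraMap_of_mul_mem {K A : Type*} [Field K] [CommRing A] [Algebra K A]
    {f c : A} (hc : c ∈ (algebraMap K A).range) (hc0 : c ≠ 0)
    (hfc : f * c ∈ (algebraMap K A).range) : f ∈ (algebraMap K A).range := by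
  obtain ⟨z, rfl⟩ := hc
  obtain ⟨w, hw⟩ := hfc
  have hz : z ≠ 0 := by rintro rfl; exact hc0 (map_zero _)
  refine ⟨w * z⁻¹, ?_⟩
  rw [map_mul, hw, mul_assoc, ← map_mul, mul_inv_cancel₀ hz, map_one, mul_one]

namespace CourantAlgebroid

variable {O : Type*} [CommRing O] [Algebra ℂ O] {Q : Type*} [AddCommGroup Q] [Module O Q]
  (C : CourantAlgebroid O Q)

theorem par_pair_eq_zero_of_flat (nabla : Vec O →ₗ[O] Q)
    (hflat : ∀ ξ η : Vec O, C.bracket (nabla ξ) (nabla η) = nabla ⁅ξ, η⁆) (ξ η : Vec O) :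
    C.par (C.pair (nabla ξ) (nabla η)) = 0 := by
  rw [← C.symm_bracket, hflat, hflat, ← map_add, ← lie_skew η ξ, add_neg_cancel, map_zero]

end CourantAlgebroid

theorem flat_connection_is_isotropic_general
    (O : Type*) [CommRing O] [Algebra ℂ O]
    (Q : Type*) [AddCommGroup Q] [Module O Q]
    (C : CourantAlgebroid O Q)
    (hker : ∀ a : O, C.par a = 0 → a ∈ (algebraMap ℂ O).range)
    (hnc : ∃ f : O, f ∉ (algebraMap ℂ O).range)
    (nabla : Vec O →ₗ[O] Q)
    (hflat : ∀ ξ η : Vec O, C.bracket (nabla ξ) (nabla η) = nabla ⁅ξ, η⁆) :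
    ∀ ξ η : Vec O, C.pair (nabla ξ) (nabla η) = 0 := by
  intro ξ η
  by_contra hne
  obtain ⟨f, hf⟩ := hnc
  have hconst : ∀ ξ' : Vec O, C.pair (nabla ξ') (nabla η) ∈ (algebraMap ℂ O).range :=
    fun ξ' => hker _ (C.par_pair_eq_zero_of_flat nabla hflat ξ' η)
  refine hf (mem_range_algebraMap_of_mul_mem (hconst ξ) hne ?_)
  simpa only [map_smul, LinearMap.smul_apply, smul_eq_mul] using hconst (f • ξ)

/-- a flat connection on a transitive Courant algebroid is a
connection: if `nabla` is an `O`-linear section of the anchor which is a morphism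
of Leibniz algebras, then the symmetric pairing vanishes on the image of `nabla`.
(The hypotheses `hker`, `hnc` and `IsDomain O` encode that the kernel of the
derivation `∂` consists of the constants and that not every function is
constant, as in the geometric setting.) -/
theorem flat_connection_is_isotropic
    (O : Type*) [CommRing O] [IsDomain O] [Algebra ℂ O]
    (Q : Type*) [AddCommGroup Q] [Module O Q]
    (C : CourantAlgebroid O Q)
    (hsurj : Function.Surjective C.anchor)
    (hker : ∀ a : O, C.par a = 0 → a ∈ (algebraMap ℂ O).range)
    (hnc : ∃ f : O, f ∉ (algebraMap ℂ O).range)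
    (nabla : Vec O →ₗ[O] Q)
    (hsec : ∀ ξ : Vec O, C.anchor (nabla ξ) = ξ)
    (hflat : ∀ ξ η : Vec O, C.bracket (nabla ξ) (nabla η) = nabla ⁅ξ, η⁆) :
    ∀ ξ η : Vec O, C.pair (nabla ξ) (nabla η) = 0 :=
  flat_connection_is_isotropic_general O Q C hker hnc nabla hflat
end
end

section
/- Let Â be a Courant extension of a transitive Lie algebroid A, and for B ∈ Ω²_X define exp(B)(a) = a + ι_{π(a)}B. Then exp(B) is an automorphism of Â as a Courant extension of A (i.e. preserving the bracket, pairing, anchor and the identifications) if and only if B is closed; and every automorphism of Â in the category of Courant extensions of A is of this form. Thus exp establishes an isomorphism Ω^{2,cl}_X ≅ Aut(Â). -/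
noncomputable section

variable {O : Type*} [CommRing O] [Algebra ℂ O]

/-- Evaluation of vector fields on a function `f`, as an `O`-linear one-form `df`. -/
def evalForm (O : Type*) [CommRing O] [Algebra ℂ O] (f : O) : Vec O →ₗ[O] O where
  toFun ξ := ξ f
  map_add' ξ η := by simp
  map_smul' g ξ := by simp

/-- The Koszul formula for the exterior derivative of a `2`-form `B`. -/
def koszulD2 (B : Vec O →ₗ[O] Vec O →ₗ[O] O) (ξ₀ ξ₁ ξ₂ : Vec O) : O :=
  ξ₀ (B ξ₁ ξ₂) - ξ₁ (B ξ₀ ξ₂) + ξ₂ (B ξ₀ ξ₁)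
    - B ⁅ξ₀, ξ₁⁆ ξ₂ + B ⁅ξ₀, ξ₂⁆ ξ₁ - B ⁅ξ₁, ξ₂⁆ ξ₀


/-- Bracket of derivations with an `O`-scaled right argument. -/
lemma lie_smul_right (ξ η : Vec O) (f : O) : ⁅ξ, f • η⁆ = f • ⁅ξ, η⁆ + ξ f • η := by
  ext g
  simp only [Derivation.commutator_apply, Derivation.add_apply, Derivation.smul_apply,
    Derivation.leibniz, smul_eq_mul]
  ring

/-- Lie derivative of a one-form along a vector field. -/
def lieDer (ξ : Vec O) (α : Vec O →ₗ[O] O) : Vec O →ₗ[O] O where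
  toFun η := ξ (α η) - α ⁅ξ, η⁆
  map_add' η η' := by simp only [map_add, lie_add]; ring
  map_smul' f η := by
    simp only [map_smul, smul_eq_mul, lie_smul_right, map_add, Derivation.leibniz,
      RingHom.id_apply]
    ring

@[simp] lemma lieDer_apply (ξ : Vec O) (α : Vec O →ₗ[O] O) (η : Vec O) :
    lieDer ξ α η = ξ (α η) - α ⁅ξ, η⁆ := rfl

lemma lieDer_zero (α : Vec O →ₗ[O] O) : lieDer (0 : Vec O) α = 0 := by
  ext η
  simp [lieDer_apply, zero_lie]

/-- The "exterior derivative" three-form candidate, packaged as a one-form in the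
last slot. -/
def Kform (B : Vec O →ₗ[O] Vec O →ₗ[O] O) (ξ₁ ξ₂ : Vec O) : Vec O →ₗ[O] O :=
  lieDer ξ₁ (B ξ₂) - lieDer ξ₂ (B ξ₁) + evalForm O ((B ξ₁) ξ₂) - B ⁅ξ₁, ξ₂⁆

lemma Kform_apply (B : Vec O →ₗ[O] Vec O →ₗ[O] O) (hB : ∀ ξ η, B ξ η = - B η ξ)
    (ξ₁ ξ₂ η : Vec O) : Kform B ξ₁ ξ₂ η = koszulD2 B ξ₁ ξ₂ η := by
  simp only [Kform, koszulD2, LinearMap.sub_apply, LinearMap.add_apply, lieDer_apply,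
    evalForm, LinearMap.coe_mk, AddHom.coe_mk]
  rw [hB ξ₂ ⁅ξ₁, η⁆, hB ξ₁ ⁅ξ₂, η⁆]
  ring

section CourantLemmas

variable {Q : Type*} [AddCommGroup Q] [Module O Q] {C : CourantAlgebroid O Q}
  {i : (Vec O →ₗ[O] O) → Q}

lemma CA.bracket_zero_right (q : Q) : C.bracket q 0 = 0 := by
  have h := C.bracket_add_right q 0 0
  rw [add_zero] at h
  exact (left_eq_add.mp h)

lemma CA.bracket_mem_Omega (q : Q) {w : Q} (hw : w ∈ C.Omega) :
    C.bracket q w ∈ C.Omega := by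
  induction hw using Submodule.span_induction with
  | mem x hx =>
      obtain ⟨f, rfl⟩ := hx
      rw [C.bracket_par]
      exact Submodule.subset_span ⟨_, rfl⟩
  | zero => rw [CA.bracket_zero_right]; exact (C.Omega).zero_mem
  | add x y hx hy ihx ihy =>
      rw [C.bracket_add_right]; exact (C.Omega).add_mem ihx ihy
  | smul f x hx ihx =>
      rw [C.leibniz]
      exact (C.Omega).add_mem ((C.Omega).smul_mem _ ihx) ((C.Omega).smul_mem _ hx)

end CourantLemmas


section CourantLemmas2

variable {Q : Type*} [AddCommGroup Q] [Module O Q] {C : CourantAlgebroid O Q}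
  {i : (Vec O →ₗ[O] O) → Q}

lemma CA.i_zero (hi_smul : ∀ (f : O) α, i (f • α) = f • i α) : i 0 = 0 := by
  have h := hi_smul 0 0
  simpa using h

lemma CA.i_neg (hi_smul : ∀ (f : O) α, i (f • α) = f • i α) (α : Vec O →ₗ[O] O) :
    i (-α) = - i α := by
  have h := hi_smul (-1 : O) α
  have h2 : (-1 : O) • α = -α := by ext; simp
  rw [h2] at h
  simpa [neg_one_smul] using h

lemma CA.i_sub (hi_add : ∀ α β, i (α + β) = i α + i β)
    (hi_smul : ∀ (f : O) α, i (f • α) = f • i α) (α β : Vec O →ₗ[O] O) :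
    i (α - β) = i α - i β := by
  rw [sub_eq_add_neg, hi_add, CA.i_neg hi_smul, sub_eq_add_neg]

/-- The bracket with a one-form on the right is the Lie derivative. -/
lemma CA.bracket_i
    (hsurj : Function.Surjective C.anchor)
    (hi_pair : ∀ (q : Q) α, C.pair q (i α) = α (C.anchor q))
    (hi_inj : Function.Injective i)
    (hOmega : ∀ w ∈ C.Omega, ∃ α, w = i α)
    (hmem : ∀ α, i α ∈ C.Omega)
    (q : Q) (α : Vec O →ₗ[O] O) :
    C.bracket q (i α) = i (lieDer (C.anchor q) α) := by
  obtain ⟨β, hβ⟩ := hOmega _ (CA.bracket_mem_Omega q (hmem α))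
  rw [hβ]
  congr 1
  ext η
  obtain ⟨r, rfl⟩ := hsurj η
  have hinv := C.invar q (i α) r
  have h1 : C.pair (C.bracket q (i α)) r = β (C.anchor r) := by
    rw [C.pair_symm, hβ, hi_pair]
  have h2 : C.pair (i α) (C.bracket q r) = α ⁅C.anchor q, C.anchor r⁆ := by
    rw [C.pair_symm, hi_pair, C.anchor_bracket]
  have h3 : C.pair (i α) r = α (C.anchor r) := by
    rw [C.pair_symm, hi_pair]
  rw [h1, h2, h3] at hinv
  simp only [lieDer_apply]
  linear_combination hinv

lemma CA.bracket_i_left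
    (hsurj : Function.Surjective C.anchor)
    (hi_pair : ∀ (q : Q) α, C.pair q (i α) = α (C.anchor q))
    (hi_inj : Function.Injective i)
    (hOmega : ∀ w ∈ C.Omega, ∃ α, w = i α)
    (hmem : ∀ α, i α ∈ C.Omega)
    (α : Vec O →ₗ[O] O) (q : Q) :
    C.bracket (i α) q = C.par (α (C.anchor q)) - i (lieDer (C.anchor q) α) := by
  have h := C.symm_bracket (i α) q
  rw [CA.bracket_i hsurj hi_pair hi_inj hOmega hmem q α] at h
  have hp : C.pair (i α) q = α (C.anchor q) := by rw [C.pair_symm, hi_pair]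
  rw [hp] at h
  linear_combination (norm := abel) h

lemma CA.bracket_ii
    (hsurj : Function.Surjective C.anchor)
    (hi_smul : ∀ (f : O) α, i (f • α) = f • i α)
    (hi_pair : ∀ (q : Q) α, C.pair q (i α) = α (C.anchor q))
    (hi_anchor : ∀ α, C.anchor (i α) = 0)
    (hi_inj : Function.Injective i)
    (hOmega : ∀ w ∈ C.Omega, ∃ α, w = i α)
    (hmem : ∀ α, i α ∈ C.Omega)
    (α β : Vec O →ₗ[O] O) :
    C.bracket (i α) (i β) = 0 := by
  rw [CA.bracket_i hsurj hi_pair hi_inj hOmega hmem, hi_anchor, lieDer_zero,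
    CA.i_zero hi_smul]

/-- Expansion of the pairing of shifted elements. -/
lemma CA.pair_exp
    (hi_pair : ∀ (q : Q) α, C.pair q (i α) = α (C.anchor q))
    (hi_anchor : ∀ α, C.anchor (i α) = 0)
    (q₁ q₂ : Q) (α₁ α₂ : Vec O →ₗ[O] O) :
    C.pair (q₁ + i α₁) (q₂ + i α₂)
      = C.pair q₁ q₂ + α₂ (C.anchor q₁) + α₁ (C.anchor q₂) := by
  have h0 : C.pair (i α₁) (i α₂) = 0 := by rw [hi_pair, hi_anchor, map_zero]
  have h1 : C.pair (i α₁) q₂ = α₁ (C.anchor q₂) := by rw [C.pair_symm, hi_pair]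
  simp only [map_add, LinearMap.add_apply, hi_pair, h0, h1, hi_anchor, map_zero]
  ring

/-- Key expansion of the bracket of shifted elements. -/
lemma CA.bracket_exp
    (hsurj : Function.Surjective C.anchor)
    (hi_add : ∀ α β, i (α + β) = i α + i β)
    (hi_smul : ∀ (f : O) α, i (f • α) = f • i α)
    (hi_par : ∀ f : O, C.par f = i (evalForm O f))
    (hi_pair : ∀ (q : Q) α, C.pair q (i α) = α (C.anchor q))
    (hi_anchor : ∀ α, C.anchor (i α) = 0)
    (hi_inj : Function.Injective i)
    (hOmega : ∀ w ∈ C.Omega, ∃ α, w = i α)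
    (hmem : ∀ α, i α ∈ C.Omega)
    (B : Vec O →ₗ[O] Vec O →ₗ[O] O) (q₁ q₂ : Q) :
    C.bracket (q₁ + i (B (C.anchor q₁))) (q₂ + i (B (C.anchor q₂)))
      = C.bracket q₁ q₂ + i (B (C.anchor (C.bracket q₁ q₂)))
        + i (Kform B (C.anchor q₁) (C.anchor q₂)) := by
  rw [C.bracket_add_left, C.bracket_add_right, C.bracket_add_right,
    CA.bracket_i hsurj hi_pair hi_inj hOmega hmem,
    CA.bracket_i_left hsurj hi_pair hi_inj hOmega hmem,
    CA.bracket_ii hsurj hi_smul hi_pair hi_anchor hi_inj hOmega hmem,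
    C.anchor_bracket]
  have hK : i (Kform B (C.anchor q₁) (C.anchor q₂))
      = i (lieDer (C.anchor q₁) (B (C.anchor q₂)))
        - i (lieDer (C.anchor q₂) (B (C.anchor q₁)))
        + i (evalForm O ((B (C.anchor q₁)) (C.anchor q₂)))
        - i (B ⁅C.anchor q₁, C.anchor q₂⁆) := by
    rw [Kform, CA.i_sub hi_add hi_smul, hi_add, CA.i_sub hi_add hi_smul]
  rw [hK, hi_par]
  abel

end CourantLemmas2

/-- for a Courant extension `Â` (here `Q`) of a transitive Lie
algebroid `A = Q̄`, the map `exp(B) : a ↦ a + ι_{π(a)} B` is an automorphism of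
`Q` in the category of Courant extensions of `A` (it always preserves the
pairing and the anchor and fixes `Ω¹`, and it preserves the bracket iff `dB=0`),
and conversely every automorphism of `Q` as a Courant extension of `A` (i.e.
a Courant automorphism inducing the identity modulo `Ω_Q`) is of the form
`exp(B)` for a unique... closed `2`-form `B`.  Thus
`exp : Ω^{2,cl} ≅ Aut(Â)`. -/
theorem exp_closed_two_forms_are_the_automorphisms
    (Q : Type*) [AddCommGroup Q] [Module O Q]
    (C : CourantAlgebroid O Q)
    (hsurj : Function.Surjective C.anchor)
    (i : (Vec O →ₗ[O] O) → Q)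
    (hi_add : ∀ α β, i (α + β) = i α + i β)
    (hi_smul : ∀ (f : O) α, i (f • α) = f • i α)
    (hi_par : ∀ f : O, C.par f = i (evalForm O f))
    (hi_pair : ∀ (q : Q) α, C.pair q (i α) = α (C.anchor q))
    (hi_anchor : ∀ α, C.anchor (i α) = 0)
    (hi_inj : Function.Injective i)
    (hOmega : ∀ w ∈ C.Omega, ∃ α, w = i α)
    (hmem : ∀ α, i α ∈ C.Omega) :
    (∀ B : Vec O →ₗ[O] Vec O →ₗ[O] O, (∀ ξ η, B ξ η = - B η ξ) →
      ((∀ q₁ q₂ : Q,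
          C.pair (q₁ + i (B (C.anchor q₁))) (q₂ + i (B (C.anchor q₂))) = C.pair q₁ q₂)
        ∧ (∀ q : Q, C.anchor (q + i (B (C.anchor q))) = C.anchor q)
        ∧ (∀ f : O, C.par f + i (B (C.anchor (C.par f))) = C.par f)
        ∧ Function.Bijective (fun q : Q => q + i (B (C.anchor q)))
        ∧ ((∀ q₁ q₂ : Q,
              C.bracket q₁ q₂ + i (B (C.anchor (C.bracket q₁ q₂)))
                = C.bracket (q₁ + i (B (C.anchor q₁))) (q₂ + i (B (C.anchor q₂))))
            ↔ (∀ ξ₀ ξ₁ ξ₂ : Vec O, koszulD2 B ξ₀ ξ₁ ξ₂ = 0))))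
    ∧ (∀ φ : Q → Q,
        (∀ q₁ q₂, φ (q₁ + q₂) = φ q₁ + φ q₂) →
        (∀ (f : O) (q : Q), φ (f • q) = f • φ q) →
        (∀ q₁ q₂, φ (C.bracket q₁ q₂) = C.bracket (φ q₁) (φ q₂)) →
        (∀ q₁ q₂, C.pair (φ q₁) (φ q₂) = C.pair q₁ q₂) →
        (∀ q, C.anchor (φ q) = C.anchor q) →
        (∀ f : O, φ (C.par f) = C.par f) →
        (∀ q, φ q - q ∈ C.Omega) →
        ∃! B : Vec O →ₗ[O] Vec O →ₗ[O] O,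
          (∀ ξ η, B ξ η = - B η ξ)
          ∧ (∀ ξ₀ ξ₁ ξ₂ : Vec O, koszulD2 B ξ₀ ξ₁ ξ₂ = 0)
          ∧ (∀ q : Q, φ q = q + i (B (C.anchor q)))) := by
  have hiz : i 0 = 0 := CA.i_zero hi_smul
  have part1 : ∀ B : Vec O →ₗ[O] Vec O →ₗ[O] O, (∀ ξ η, B ξ η = - B η ξ) →
      ((∀ q₁ q₂ : Q,
          C.pair (q₁ + i (B (C.anchor q₁))) (q₂ + i (B (C.anchor q₂))) = C.pair q₁ q₂)
        ∧ (∀ q : Q, C.anchor (q + i (B (C.anchor q))) = C.anchor q)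
        ∧ (∀ f : O, C.par f + i (B (C.anchor (C.par f))) = C.par f)
        ∧ Function.Bijective (fun q : Q => q + i (B (C.anchor q)))
        ∧ ((∀ q₁ q₂ : Q,
              C.bracket q₁ q₂ + i (B (C.anchor (C.bracket q₁ q₂)))
                = C.bracket (q₁ + i (B (C.anchor q₁))) (q₂ + i (B (C.anchor q₂))))
            ↔ (∀ ξ₀ ξ₁ ξ₂ : Vec O, koszulD2 B ξ₀ ξ₁ ξ₂ = 0))) := by
    intro B hB
    refine ⟨?_, ?_, ?_, ?_, ?_⟩
    · intro q₁ q₂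
      rw [CA.pair_exp hi_pair hi_anchor, hB (C.anchor q₂) (C.anchor q₁)]
      ring
    · intro q
      rw [map_add, hi_anchor, add_zero]
    · intro f
      rw [C.anchor_par, map_zero, hiz, add_zero]
    · refine Function.bijective_iff_has_inverse.mpr
        ⟨fun q => q + i (-(B (C.anchor q))), ?_, ?_⟩
      · intro q
        simp only
        have h1 : C.anchor (q + i (B (C.anchor q))) = C.anchor q := by
          rw [map_add, hi_anchor, add_zero]
        rw [h1, add_assoc, ← hi_add, add_neg_cancel, hiz, add_zero]
      · intro q
        simp only
        have h1 : C.anchor (q + i (-(B (C.anchor q)))) = C.anchor q := by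
          rw [map_add, hi_anchor, add_zero]
        rw [h1, add_assoc, ← hi_add, neg_add_cancel, hiz, add_zero]
    · constructor
      · intro h ξ₀ ξ₁ ξ₂
        obtain ⟨q₁, rfl⟩ := hsurj ξ₀
        obtain ⟨q₂, rfl⟩ := hsurj ξ₁
        have he := h q₁ q₂
        rw [CA.bracket_exp hsurj hi_add hi_smul hi_par hi_pair hi_anchor hi_inj
          hOmega hmem] at he
        have hK0 : Kform B (C.anchor q₁) (C.anchor q₂) = 0 :=
          hi_inj ((left_eq_add.mp he).trans hiz.symm)
        rw [← Kform_apply B hB, hK0]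
        rfl
      · intro h q₁ q₂
        rw [CA.bracket_exp hsurj hi_add hi_smul hi_par hi_pair hi_anchor hi_inj
          hOmega hmem]
        have hK0 : Kform B (C.anchor q₁) (C.anchor q₂) = 0 := by
          ext η
          rw [Kform_apply B hB, h]
          rfl
        rw [hK0, hiz, add_zero]
  refine ⟨part1, ?_⟩
  intro φ hadd hsmul hbr hpair hanch hpar hsub
  have hαof' : ∀ q : Q, ∃ α, φ q - q = i α := fun q => hOmega _ (hsub q)
  choose αof hαof using hαof'
  have hφ : ∀ q, φ q = q + i (αof q) := fun q => by rw [← hαof q]; abel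
  have hstar : ∀ q₁ q₂ : Q, αof q₂ (C.anchor q₁) + αof q₁ (C.anchor q₂) = 0 := by
    intro q₁ q₂
    have h := hpair q₁ q₂
    rw [hφ q₁, hφ q₂, CA.pair_exp hi_pair hi_anchor] at h
    linear_combination h
  have hwd : ∀ q q' : Q, C.anchor q = C.anchor q' → αof q = αof q' := by
    intro q q' h
    ext η
    obtain ⟨r, rfl⟩ := hsurj η
    have h1 := hstar r q
    have h2 := hstar r q'
    rw [h] at h1
    linear_combination h1 - h2
  have hαof_add : ∀ q q' : Q, αof (q + q') = αof q + αof q' := by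
    intro q q'
    apply hi_inj
    rw [hi_add, ← hαof, ← hαof, ← hαof, hadd]
    abel
  have hαof_smul : ∀ (f : O) (q : Q), αof (f • q) = f • αof q := by
    intro f q
    apply hi_inj
    rw [hi_smul, ← hαof, ← hαof, hsmul, smul_sub]
  obtain ⟨sec, hsec⟩ : ∃ sec : Vec O → Q, ∀ ξ, C.anchor (sec ξ) = ξ :=
    ⟨fun ξ => (hsurj ξ).choose, fun ξ => (hsurj ξ).choose_spec⟩
  obtain ⟨B, hBa⟩ : ∃ B : Vec O →ₗ[O] Vec O →ₗ[O] O, ∀ ξ, B ξ = αof (sec ξ) :=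
    ⟨{ toFun := fun ξ => αof (sec ξ)
       map_add' := fun ξ ξ' => by
         show αof (sec (ξ + ξ')) = αof (sec ξ) + αof (sec ξ')
         rw [hwd (sec (ξ + ξ')) (sec ξ + sec ξ') (by rw [map_add, hsec, hsec, hsec]),
           hαof_add]
       map_smul' := fun f ξ => by
         show αof (sec (f • ξ)) = f • αof (sec ξ)
         rw [hwd (sec (f • ξ)) (f • sec ξ) (by rw [map_smul, hsec, hsec]), hαof_smul] }, fun _ => rfl⟩
  have hBq : ∀ q : Q, B (C.anchor q) = αof q := fun q => by
    rw [hBa]; exact hwd _ _ (hsec (C.anchor q))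
  have hform : ∀ q : Q, φ q = q + i (B (C.anchor q)) := fun q => by
    rw [hBq]; exact hφ q
  have halt : ∀ ξ η, B ξ η = - B η ξ := by
    intro ξ η
    have h := hstar (sec η) (sec ξ)
    rw [hsec, hsec, ← hBa, ← hBa] at h
    linear_combination h
  have hbrcond : ∀ q₁ q₂ : Q, C.bracket q₁ q₂ + i (B (C.anchor (C.bracket q₁ q₂)))
      = C.bracket (q₁ + i (B (C.anchor q₁))) (q₂ + i (B (C.anchor q₂))) := by
    intro q₁ q₂
    rw [← hform (C.bracket q₁ q₂), ← hform q₁, ← hform q₂]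
    exact hbr q₁ q₂
  have hclosed := ((part1 B halt).2.2.2.2).mp hbrcond
  refine ⟨B, ⟨halt, hclosed, hform⟩, ?_⟩
  intro B' hB'
  ext ξ η
  obtain ⟨q, rfl⟩ := hsurj ξ
  have h3 : i (B' (C.anchor q)) = i (B (C.anchor q)) :=
    add_left_cancel ((hB'.2.2 q).symm.trans (hform q))
  exact LinearMap.congr_fun (hi_inj h3) η
end
end

section
/- Let V be a flat C[[t]]-family of vertex O_X-algebroids such that V₀ = V/tV is commutative. Then V₀, with the O_X-module structure f·v̄ = (f*v)‾, the derivation ∂₀(f) = ∂(f)‾, the anchor π₀(v̄) = ((1/t)π(v))‾, the bracket [v̄₁,v̄₂]₀ = ((1/t)[v₁,v₂])‾, and the pairing ⟨v̄₁,v̄₂⟩₀ = ((1/t)⟨v₁,v₂⟩)‾, is a Courant O_X-algebroid. -/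
/-!
Write every bracket, pairing and anchor of the family as `t` times a divided value. Each Courant
axiom is then the corresponding vertex algebroid axiom divided by a power of `t`. The quantum
corrections `π(v)(f) * ∂g` and `π(v₁)(π(v₂) f)` carry a factor `t` (resp. `t²`), which is what
makes `*` associative and `⟨,⟩₀` bilinear modulo `t`, and `ℂ[[t]]`-linear derivations kill `t`,
so `t` can be pulled out of every anchor. Torsion-freeness then cancels the common powers of `t`.
-/

noncomputable section

/-- The formal parameter `t` of the `ℂ[[t]]`-family. -/
def tpar : PowerSeries ℂ := PowerSeries.X

/-- The image of `t` in a `ℂ[[t]]`-algebra of functions `O`. -/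
def tO (O : Type*) [CommRing O] [Algebra (PowerSeries ℂ) O] : O :=
  algebraMap (PowerSeries ℂ) O tpar

namespace Derivation

variable {R A : Type*} [CommRing R] [CommRing A] [Algebra R A]

theorem map_algebraMap_mul (D : Derivation R A A) (r : R) (a : A) :
    D (algebraMap R A r * a) = algebraMap R A r * D a := by
  rw [← Algebra.smul_def, D.map_smul, Algebra.smul_def]

theorem lie_algebraMap_smul (r : R) (D₁ D₂ : Derivation R A A) :
    ⁅algebraMap R A r • D₁, algebraMap R A r • D₂⁆ =
      algebraMap R A r • algebraMap R A r • ⁅D₁, D₂⁆ := by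
  simp only [algebraMap_smul, smul_lie, lie_smul]

end Derivation

section QuasiclassicalLimit

variable {R O V : Type*} [CommRing R] [CommRing O] [Algebra R O]
  {t : R} {st : O → V → V} {br : V → V → V} {anchor : V → Derivation R O O}
  {pr : V → V → O} {par : O → V}

theorem pr_st_sub_mul_pr_eq_mul_mul
    (va_pair : ∀ f v₁ v₂, pr (st f v₁) v₂ = f * pr v₁ v₂ - anchor v₁ (anchor v₂ f))
    {v₁ v₂ : V} {ξ₁ ξ₂ : Derivation R O O} (hξ₁ : anchor v₁ = algebraMap R O t • ξ₁)
    (hξ₂ : anchor v₂ = algebraMap R O t • ξ₂) (f : O) :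
    pr (st f v₁) v₂ - f * pr v₁ v₂ =
      algebraMap R O t * (algebraMap R O t * -ξ₁ (ξ₂ f)) := by
  simp only [va_pair, hξ₁, hξ₂, Derivation.smul_apply, smul_eq_mul, ξ₁.map_algebraMap_mul]
  ring

theorem anchor_st_eq_smul (va_anchor : ∀ f v, anchor (st f v) = f • anchor v)
    {v : V} {ξ : Derivation R O O} (hξ : anchor v = algebraMap R O t • ξ) (f : O) :
    anchor (st f v) = algebraMap R O t • (f • ξ) := by
  rw [va_anchor, hξ, smul_comm]

theorem pr_par_eq_mul (va_prpar : ∀ v f, pr v (par f) = anchor v f)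
    {v : V} {ξ : Derivation R O O} (hξ : anchor v = algebraMap R O t • ξ) (f : O) :
    pr v (par f) = algebraMap R O t * ξ f := by
  rw [va_prpar, hξ, Derivation.smul_apply, smul_eq_mul]

variable [AddCommGroup V] [Module R V]

theorem st_st_sub_st_mul_eq_smul
    (st_Rsmul₁ : ∀ (r : R) f v, st (r • f) v = r • st f v)
    (va_assoc : ∀ f g v,
      st f (st g v) - st (f * g) v = st (anchor v f) (par g) + st (anchor v g) (par f))
    {v : V} {ξ : Derivation R O O} (hξ : anchor v = algebraMap R O t • ξ) (f g : O) :
    st f (st g v) - st (f * g) v = t • (st (ξ f) (par g) + st (ξ g) (par f)) := by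
  simp only [va_assoc, hξ, Derivation.smul_apply, smul_eq_mul, ← Algebra.smul_def, st_Rsmul₁,
    smul_add]

theorem br_st_eq_smul
    (st_Rsmul₁ : ∀ (r : R) f v, st (r • f) v = r • st f v)
    (st_Rsmul₂ : ∀ (r : R) f v, st f (r • v) = r • st f v)
    (va_leib : ∀ f v₁ v₂, br v₁ (st f v₂) = st (anchor v₁ f) v₂ + st f (br v₁ v₂))
    {v₁ v₂ B : V} {ξ₁ : Derivation R O O} (hB : br v₁ v₂ = t • B)
    (hξ₁ : anchor v₁ = algebraMap R O t • ξ₁) (f : O) :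
    br v₁ (st f v₂) = t • (st (ξ₁ f) v₂ + st f B) := by
  rw [va_leib, hB, hξ₁, Derivation.smul_apply, smul_eq_mul, ← Algebra.smul_def, st_Rsmul₁,
    st_Rsmul₂, smul_add]

theorem divBr_add_divBr_swap_eq_par (hV : IsSMulRegular V t)
    (par_Rsmul : ∀ (r : R) f, par (r • f) = r • par f)
    (va_symm : ∀ v₁ v₂, br v₁ v₂ + br v₂ v₁ = par (pr v₁ v₂))
    {v₁ v₂ B₁₂ B₂₁ : V} {g : O} (h₁₂ : br v₁ v₂ = t • B₁₂) (h₂₁ : br v₂ v₁ = t • B₂₁)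
    (hg : pr v₁ v₂ = algebraMap R O t * g) :
    B₁₂ + B₂₁ = par g := by
  apply hV
  simpa only [smul_add, h₁₂, h₂₁, hg, ← Algebra.smul_def, par_Rsmul] using va_symm v₁ v₂

theorem divBr_jacobi (hV : IsSMulRegular V t)
    (br_Rsmul₁ : ∀ (r : R) v w, br (r • v) w = r • br v w)
    (br_Rsmul₂ : ∀ (r : R) v w, br v (r • w) = r • br v w)
    (jacobi : ∀ u v w, br u (br v w) = br (br u v) w + br v (br u w))
    {v₁ v₂ v₃ B₂₃ B₁₂ B₁₃ J₁ J₂ J₃ : V}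
    (h₂₃ : br v₂ v₃ = t • B₂₃) (h₁₂ : br v₁ v₂ = t • B₁₂) (h₁₃ : br v₁ v₃ = t • B₁₃)
    (hJ₁ : br v₁ B₂₃ = t • J₁) (hJ₂ : br B₁₂ v₃ = t • J₂) (hJ₃ : br v₂ B₁₃ = t • J₃) :
    J₁ = J₂ + J₃ := by
  apply hV.mul hV
  simpa only [mul_smul, smul_add, h₂₃, h₁₂, h₁₃, br_Rsmul₁, br_Rsmul₂, hJ₁, hJ₂, hJ₃]
    using jacobi v₁ v₂ v₃

theorem divAnchor_br_eq_lie (hT : IsSMulRegular (Derivation R O O) (algebraMap R O t))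
    (anchor_Rsmul : ∀ (r : R) v, anchor (r • v) = algebraMap R O r • anchor v)
    (anchor_br : ∀ v w, anchor (br v w) = ⁅anchor v, anchor w⁆)
    {v₁ v₂ B : V} {ξ₁ ξ₂ ξB : Derivation R O O} (hB : br v₁ v₂ = t • B)
    (hξ₁ : anchor v₁ = algebraMap R O t • ξ₁) (hξ₂ : anchor v₂ = algebraMap R O t • ξ₂)
    (hξB : anchor B = algebraMap R O t • ξB) :
    ξB = ⁅ξ₁, ξ₂⁆ := by
  apply hT.mul hT
  simpa only [mul_smul, hB, anchor_Rsmul, hξB, hξ₁, hξ₂, Derivation.lie_algebraMap_smul]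
    using anchor_br v₁ v₂

theorem divPr_invariant (hO : IsSMulRegular O (algebraMap R O t))
    (pr_Rsmul₁ : ∀ (r : R) v w, pr (r • v) w = algebraMap R O r * pr v w)
    (pr_symm : ∀ v w, pr v w = pr w v)
    (va_invar : ∀ v v₁ v₂, anchor v (pr v₁ v₂) = pr (br v v₁) v₂ + pr v₁ (br v v₂))
    {v v₁ v₂ B₁ B₂ : V} {c₁ c₂ g : O} {ξ : Derivation R O O}
    (hB₁ : br v v₁ = t • B₁) (hB₂ : br v v₂ = t • B₂)
    (hc₁ : pr B₁ v₂ = algebraMap R O t * c₁) (hc₂ : pr v₁ B₂ = algebraMap R O t * c₂)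
    (hg : pr v₁ v₂ = algebraMap R O t * g) (hξ : anchor v = algebraMap R O t • ξ) :
    c₁ + c₂ = ξ g := by
  have h := va_invar v v₁ v₂
  rw [hB₁, hB₂, hg, hξ, pr_Rsmul₁, pr_symm v₁, pr_Rsmul₁, pr_symm B₂, hc₁, hc₂,
    Derivation.smul_apply, smul_eq_mul, ξ.map_algebraMap_mul] at h
  apply hO.mul hO
  simp only [smul_eq_mul]
  linear_combination -h

theorem br_par_eq_smul (par_Rsmul : ∀ (r : R) f, par (r • f) = r • par f)
    (va_brpar : ∀ v f, br v (par f) = par (anchor v f))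
    {v : V} {ξ : Derivation R O O} (hξ : anchor v = algebraMap R O t • ξ) (f : O) :
    br v (par f) = t • par (ξ f) := by
  rw [va_brpar, hξ, Derivation.smul_apply, smul_eq_mul, ← Algebra.smul_def, par_Rsmul]

end QuasiclassicalLimit

theorem quasiclassical_limit_is_courant_general
    (O : Type*) [CommRing O] [Algebra (PowerSeries ℂ) O]
    (V : Type*) [AddCommGroup V] [Module (PowerSeries ℂ) V]
    (st : O → V → V)
    (br : V → V → V)
    (anchor : V → Derivation (PowerSeries ℂ) O O)
    (pr : V → V → O)
    (par : O → V)
    -- bilinearity of the operations over `ℂ[[t]]`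
    (st_Rsmul₁ : ∀ (r : PowerSeries ℂ) f v, st (r • f) v = r • st f v)
    (st_Rsmul₂ : ∀ (r : PowerSeries ℂ) f v, st f (r • v) = r • st f v)
    (br_Rsmul₁ : ∀ (r : PowerSeries ℂ) v w, br (r • v) w = r • br v w)
    (br_Rsmul₂ : ∀ (r : PowerSeries ℂ) v w, br v (r • w) = r • br v w)
    (pr_Rsmul₁ : ∀ (r : PowerSeries ℂ) v w, pr (r • v) w = algebraMap (PowerSeries ℂ) O r * pr v w)
    (pr_symm : ∀ v w, pr v w = pr w v)
    (anchor_Rsmul : ∀ (r : PowerSeries ℂ) v,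
      anchor (r • v) = algebraMap (PowerSeries ℂ) O r • anchor v)
    (par_Rsmul : ∀ (r : PowerSeries ℂ) f, par (r • f) = r • par f)
    -- the vertex algebroid axioms
    (anchor_br : ∀ v w, anchor (br v w) = ⁅anchor v, anchor w⁆)
    (jacobi : ∀ u v w, br u (br v w) = br (br u v) w + br v (br u w))
    (va_assoc : ∀ f g v,
      st f (st g v) - st (f * g) v = st (anchor v f) (par g) + st (anchor v g) (par f))
    (va_leib : ∀ f v₁ v₂, br v₁ (st f v₂) = st (anchor v₁ f) v₂ + st f (br v₁ v₂))
    (va_symm : ∀ v₁ v₂, br v₁ v₂ + br v₂ v₁ = par (pr v₁ v₂))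
    (va_anchor : ∀ f v, anchor (st f v) = f • anchor v)
    (va_pair : ∀ f v₁ v₂, pr (st f v₁) v₂ = f * pr v₁ v₂ - anchor v₁ (anchor v₂ f))
    (va_invar : ∀ v v₁ v₂, anchor v (pr v₁ v₂) = pr (br v v₁) v₂ + pr v₁ (br v v₂))
    (va_brpar : ∀ v f, br v (par f) = par (anchor v f))
    (va_prpar : ∀ v f, pr v (par f) = anchor v f)
    -- commutativity of `V₀`: bracket, pairing and anchor take values in `t·(-)`
    (han_div : ∀ v, ∃ ξ, anchor v = tO O • ξ)
    -- flatness of the family: `t`-torsion-freeness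
    (htV : ∀ v : V, tpar • v = 0 → v = 0)
    (htO : ∀ g : O, tO O * g = 0 → g = 0)
    (htT : ∀ ξ : Derivation (PowerSeries ℂ) O O, tO O • ξ = 0 → ξ = 0) :
    -- `V₀` is an `O`-module: `*` is associative mod `t`
    (∀ f g v, ∃ w, st f (st g v) - st (f * g) v = tpar • w)
    -- the divided pairing is `O`-bilinear
    ∧ (∀ f v₁ v₂, ∃ g : O, pr (st f v₁) v₂ - f * pr v₁ v₂ = tO O * (tO O * g))
    -- Courant-Leibniz rule for the divided bracket
    ∧ (∀ f v₁ v₂ B ξ₁, br v₁ v₂ = tpar • B → anchor v₁ = tO O • ξ₁ →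
        br v₁ (st f v₂) = tpar • (st (ξ₁ f) v₂ + st f B))
    -- symmetrization of the divided bracket is `∂₀` of the divided pairing
    ∧ (∀ v₁ v₂ B₁₂ B₂₁ g, br v₁ v₂ = tpar • B₁₂ → br v₂ v₁ = tpar • B₂₁ →
        pr v₁ v₂ = tO O * g → B₁₂ + B₂₁ = par g)
    -- Jacobi identity for the divided bracket
    ∧ (∀ v₁ v₂ v₃ B₂₃ B₁₂ B₁₃ J₁ J₂ J₃,
        br v₂ v₃ = tpar • B₂₃ → br v₁ v₂ = tpar • B₁₂ → br v₁ v₃ = tpar • B₁₃ →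
        br v₁ B₂₃ = tpar • J₁ → br B₁₂ v₃ = tpar • J₂ → br v₂ B₁₃ = tpar • J₃ →
        J₁ = J₂ + J₃)
    -- the divided anchor is a morphism of Leibniz algebras
    ∧ (∀ v₁ v₂ B ξ₁ ξ₂ ξB, br v₁ v₂ = tpar • B →
        anchor v₁ = tO O • ξ₁ → anchor v₂ = tO O • ξ₂ → anchor B = tO O • ξB →
        ξB = ⁅ξ₁, ξ₂⁆)
    -- the divided anchor is `O`-linear
    ∧ (∀ f v ξ, anchor v = tO O • ξ → anchor (st f v) = tO O • (f • ξ))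
    -- invariance of the divided pairing
    ∧ (∀ v v₁ v₂ B₁ B₂ c₁ c₂ g ξ,
        br v v₁ = tpar • B₁ → br v v₂ = tpar • B₂ →
        pr B₁ v₂ = tO O * c₁ → pr v₁ B₂ = tO O * c₂ →
        pr v₁ v₂ = tO O * g → anchor v = tO O • ξ →
        c₁ + c₂ = ξ g)
    -- `[v, ∂₀ f] = ∂₀ (π₀(v) f)`
    ∧ (∀ v f ξ, anchor v = tO O • ξ → br v (par f) = tpar • par (ξ f))
    -- `⟨v, ∂₀ f⟩₀ = π₀(v) f`
    ∧ (∀ v f ξ, anchor v = tO O • ξ → pr v (par f) = tO O * (ξ f)) := by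
  have hV : IsSMulRegular V tpar := .of_right_eq_zero_of_smul htV
  have hO : IsSMulRegular O (tO O) := .of_right_eq_zero_of_smul htO
  have hT : IsSMulRegular (Derivation (PowerSeries ℂ) O O) (tO O) :=
    .of_right_eq_zero_of_smul (M := Derivation (PowerSeries ℂ) O O) htT
  refine ⟨fun f g v => ?_, fun f v₁ v₂ => ?_, fun f _ _ _ _ hB hξ₁ =>
    br_st_eq_smul st_Rsmul₁ st_Rsmul₂ va_leib hB hξ₁ f,
    fun _ _ _ _ _ => divBr_add_divBr_swap_eq_par hV par_Rsmul va_symm,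
    fun _ _ _ _ _ _ _ _ _ => divBr_jacobi hV br_Rsmul₁ br_Rsmul₂ jacobi,
    fun _ _ _ _ _ _ => divAnchor_br_eq_lie hT anchor_Rsmul anchor_br,
    fun f _ _ hξ => anchor_st_eq_smul va_anchor hξ f,
    fun _ _ _ _ _ _ _ _ _ => divPr_invariant hO pr_Rsmul₁ pr_symm va_invar,
    fun _ f _ hξ => br_par_eq_smul par_Rsmul va_brpar hξ f,
    fun _ f _ hξ => pr_par_eq_mul va_prpar hξ f⟩
  · obtain ⟨ξ, hξ⟩ := han_div v
    exact ⟨_, st_st_sub_st_mul_eq_smul st_Rsmul₁ va_assoc hξ f g⟩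
  · obtain ⟨ξ₁, hξ₁⟩ := han_div v₁
    obtain ⟨ξ₂, hξ₂⟩ := han_div v₂
    exact ⟨_, pr_st_sub_mul_pr_eq_mul_mul va_pair hξ₁ hξ₂ f⟩

/-- let `V` be a flat `ℂ[[t]]`-family of vertex `O`-algebroids
(the nine vertex algebroid axioms hold, all operations are `ℂ[[t]]`-bilinear,
and flatness is encoded by `t`-torsion-freeness) such that `V₀ = V/tV` is
commutative, i.e. the bracket, the pairing and the anchor take values in the
`t`-divisible part.  Then `V₀`, with the `O`-module structure `f·v̄ = (f*v)‾`,
derivation `∂₀f = (∂f)‾`, anchor `π₀(v̄) = ((1/t)π v)‾`, bracket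
`[v̄₁,v̄₂]₀ = ((1/t)[v₁,v₂])‾` and pairing `⟨v̄₁,v̄₂⟩₀ = ((1/t)⟨v₁,v₂⟩)‾`, is a
Courant `O`-algebroid.  Each Courant axiom for the divided operations is
expressed below through arbitrary choices of `t`-divided witnesses (which are
unique by torsion-freeness). -/
theorem quasiclassical_limit_is_courant
    (O : Type*) [CommRing O] [Algebra (PowerSeries ℂ) O]
    (V : Type*) [AddCommGroup V] [Module (PowerSeries ℂ) V]
    (st : O → V → V)
    (br : V → V → V)
    (anchor : V → Derivation (PowerSeries ℂ) O O)
    (pr : V → V → O)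
    (par : O → V)
    -- bilinearity of the operations over `ℂ[[t]]`
    (st_add₁ : ∀ f g v, st (f + g) v = st f v + st g v)
    (st_add₂ : ∀ f v w, st f (v + w) = st f v + st f w)
    (st_Rsmul₁ : ∀ (r : PowerSeries ℂ) f v, st (r • f) v = r • st f v)
    (st_Rsmul₂ : ∀ (r : PowerSeries ℂ) f v, st f (r • v) = r • st f v)
    (st_one : ∀ v, st 1 v = v)
    (br_add₁ : ∀ u v w, br (u + v) w = br u w + br v w)
    (br_add₂ : ∀ u v w, br u (v + w) = br u v + br u w)
    (br_Rsmul₁ : ∀ (r : PowerSeries ℂ) v w, br (r • v) w = r • br v w)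
    (br_Rsmul₂ : ∀ (r : PowerSeries ℂ) v w, br v (r • w) = r • br v w)
    (pr_add₁ : ∀ u v w, pr (u + v) w = pr u w + pr v w)
    (pr_Rsmul₁ : ∀ (r : PowerSeries ℂ) v w, pr (r • v) w = algebraMap (PowerSeries ℂ) O r * pr v w)
    (pr_symm : ∀ v w, pr v w = pr w v)
    (anchor_add : ∀ v w, anchor (v + w) = anchor v + anchor w)
    (anchor_Rsmul : ∀ (r : PowerSeries ℂ) v,
      anchor (r • v) = algebraMap (PowerSeries ℂ) O r • anchor v)
    (par_add : ∀ f g, par (f + g) = par f + par g)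
    (par_Rsmul : ∀ (r : PowerSeries ℂ) f, par (r • f) = r • par f)
    -- the vertex algebroid axioms
    (anchor_par : ∀ f, anchor (par f) = 0)
    (anchor_br : ∀ v w, anchor (br v w) = ⁅anchor v, anchor w⁆)
    (jacobi : ∀ u v w, br u (br v w) = br (br u v) w + br v (br u w))
    (va_assoc : ∀ f g v,
      st f (st g v) - st (f * g) v = st (anchor v f) (par g) + st (anchor v g) (par f))
    (va_leib : ∀ f v₁ v₂, br v₁ (st f v₂) = st (anchor v₁ f) v₂ + st f (br v₁ v₂))
    (va_symm : ∀ v₁ v₂, br v₁ v₂ + br v₂ v₁ = par (pr v₁ v₂))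
    (va_anchor : ∀ f v, anchor (st f v) = f • anchor v)
    (va_pair : ∀ f v₁ v₂, pr (st f v₁) v₂ = f * pr v₁ v₂ - anchor v₁ (anchor v₂ f))
    (va_invar : ∀ v v₁ v₂, anchor v (pr v₁ v₂) = pr (br v v₁) v₂ + pr v₁ (br v v₂))
    (va_der : ∀ f g, par (f * g) = st f (par g) + st g (par f))
    (va_brpar : ∀ v f, br v (par f) = par (anchor v f))
    (va_prpar : ∀ v f, pr v (par f) = anchor v f)
    -- commutativity of `V₀`: bracket, pairing and anchor take values in `t·(-)`
    (hbr_div : ∀ v w, ∃ u, br v w = tpar • u)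
    (hpr_div : ∀ v w, ∃ g : O, pr v w = tO O * g)
    (han_div : ∀ v, ∃ ξ, anchor v = tO O • ξ)
    -- flatness of the family: `t`-torsion-freeness
    (htV : ∀ v : V, tpar • v = 0 → v = 0)
    (htO : ∀ g : O, tO O * g = 0 → g = 0)
    (htT : ∀ ξ : Derivation (PowerSeries ℂ) O O, tO O • ξ = 0 → ξ = 0) :
    -- `V₀` is an `O`-module: `*` is associative mod `t`
    (∀ f g v, ∃ w, st f (st g v) - st (f * g) v = tpar • w)
    -- the divided pairing is `O`-bilinear
    ∧ (∀ f v₁ v₂, ∃ g : O, pr (st f v₁) v₂ - f * pr v₁ v₂ = tO O * (tO O * g))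
    -- Courant-Leibniz rule for the divided bracket
    ∧ (∀ f v₁ v₂ B ξ₁, br v₁ v₂ = tpar • B → anchor v₁ = tO O • ξ₁ →
        br v₁ (st f v₂) = tpar • (st (ξ₁ f) v₂ + st f B))
    -- symmetrization of the divided bracket is `∂₀` of the divided pairing
    ∧ (∀ v₁ v₂ B₁₂ B₂₁ g, br v₁ v₂ = tpar • B₁₂ → br v₂ v₁ = tpar • B₂₁ →
        pr v₁ v₂ = tO O * g → B₁₂ + B₂₁ = par g)
    -- Jacobi identity for the divided bracket
    ∧ (∀ v₁ v₂ v₃ B₂₃ B₁₂ B₁₃ J₁ J₂ J₃,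
        br v₂ v₃ = tpar • B₂₃ → br v₁ v₂ = tpar • B₁₂ → br v₁ v₃ = tpar • B₁₃ →
        br v₁ B₂₃ = tpar • J₁ → br B₁₂ v₃ = tpar • J₂ → br v₂ B₁₃ = tpar • J₃ →
        J₁ = J₂ + J₃)
    -- the divided anchor is a morphism of Leibniz algebras
    ∧ (∀ v₁ v₂ B ξ₁ ξ₂ ξB, br v₁ v₂ = tpar • B →
        anchor v₁ = tO O • ξ₁ → anchor v₂ = tO O • ξ₂ → anchor B = tO O • ξB →
        ξB = ⁅ξ₁, ξ₂⁆)
    -- the divided anchor is `O`-linear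
    ∧ (∀ f v ξ, anchor v = tO O • ξ → anchor (st f v) = tO O • (f • ξ))
    -- invariance of the divided pairing
    ∧ (∀ v v₁ v₂ B₁ B₂ c₁ c₂ g ξ,
        br v v₁ = tpar • B₁ → br v v₂ = tpar • B₂ →
        pr B₁ v₂ = tO O * c₁ → pr v₁ B₂ = tO O * c₂ →
        pr v₁ v₂ = tO O * g → anchor v = tO O • ξ →
        c₁ + c₂ = ξ g)
    -- `[v, ∂₀ f] = ∂₀ (π₀(v) f)`
    ∧ (∀ v f ξ, anchor v = tO O • ξ → br v (par f) = tpar • par (ξ f))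
    -- `⟨v, ∂₀ f⟩₀ = π₀(v) f`
    ∧ (∀ v f ξ, anchor v = tO O • ξ → pr v (par f) = tO O * (ξ f)) :=
  quasiclassical_limit_is_courant_general O V st br anchor pr par st_Rsmul₁ st_Rsmul₂ br_Rsmul₁
    br_Rsmul₂ pr_Rsmul₁ pr_symm anchor_Rsmul par_Rsmul anchor_br jacobi va_assoc va_leib va_symm
    va_anchor va_pair va_invar va_brpar va_prpar han_div htV htO htT

end
end
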